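/- Every star of order at least 3 is in Class 2; that is, subdividing any single edge of K_{1,n} with n ≥ 2 does not change the super domination number. -/

import Mathlib

/-!
Measure a super dominating set `S` by its complement: on a finite vertex set,
`γ_sp = |V| - max |Sᶜ|`. If a leaf `u` lies outside `S`, its support vertex `w` is the only
possible witness for `u`, so `w ∈ S` and `u` is the only neighbour of `w` outside `S`.
In `K_{1,n}` this forces `|Sᶜ| ≤ 1`, and in the star with the edge to leaf `a` subdivided
by a vertex `x` it forces `Sᶜ ⊆ {a, b}` for a leaf `b`, `Sᶜ ⊆ {a}` or `Sᶜ ⊆ {center, x}`.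
Both bounds are attained, and the subdivided star has one vertex more, so both numbers are `n`.
-/

open SimpleGraph

/-- `S` is a super dominating set of `G`: every vertex `u ∉ S` has some `v ∈ S`
with `N(v) ∩ Sᶜ = {u}`. -/
def SuperDomSet {V : Type} (G : SimpleGraph V) (S : Set V) : Prop :=
  ∀ u ∈ Sᶜ, ∃ v ∈ S, G.neighborSet v ∩ Sᶜ = {u}

/-- The super domination number `γ_sp(G)`. -/
noncomputable def superDomNum {V : Type} (G : SimpleGraph V) : ℕ :=
  sInf {n | ∃ S : Set V, SuperDomSet G S ∧ S.ncard = n}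

/-- `S` is a dominating set of `G`. -/
def DomSet {V : Type} (G : SimpleGraph V) (S : Set V) : Prop :=
  ∀ u ∉ S, ∃ v ∈ S, G.Adj v u

/-- The domination number `γ(G)`. -/
noncomputable def domNum {V : Type} (G : SimpleGraph V) : ℕ :=
  sInf {n | ∃ S : Set V, DomSet G S ∧ S.ncard = n}

/-- `S` is a total dominating set of `G`: every vertex has a neighbor in `S`. -/
def TotalDomSet {V : Type} (G : SimpleGraph V) (S : Set V) : Prop :=
  ∀ u : V, ∃ v ∈ S, G.Adj v u

/-- The total domination number `γ_t(G)`. -/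
noncomputable def totalDomNum {V : Type} (G : SimpleGraph V) : ℕ :=
  sInf {n | ∃ S : Set V, TotalDomSet G S ∧ S.ncard = n}

/-- A leaf is a vertex of degree 1. -/
def IsLeaf {V : Type} (G : SimpleGraph V) (v : V) : Prop :=
  (G.neighborSet v).ncard = 1

/-- A support vertex is a vertex adjacent to a leaf. -/
def IsSupport {V : Type} (G : SimpleGraph V) (v : V) : Prop :=
  ∃ u, G.Adj v u ∧ IsLeaf G u

/-- The graph obtained from `G` by subdividing each edge in `F` once: for `e ∈ F`
the edge is removed and replaced by a path of length 2 through the new vertex `e`. -/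
def subdivide {V : Type} (G : SimpleGraph V) (F : Set (Sym2 V)) :
    SimpleGraph (V ⊕ F) where
  Adj x y :=
    match x, y with
    | Sum.inl a, Sum.inl b => G.Adj a b ∧ s(a, b) ∉ F
    | Sum.inl a, Sum.inr e => a ∈ (e : Sym2 V)
    | Sum.inr e, Sum.inl a => a ∈ (e : Sym2 V)
    | Sum.inr _, Sum.inr _ => False
  symm := by
    constructor
    rintro (a | e) (b | f) h
    · exact ⟨h.1.symm, by rw [Sym2.eq_swap]; exact h.2⟩
    · exact h
    · exact h
    · exact h
  loopless := by
    constructor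
    rintro (a | e) h
    · exact G.loopless.irrefl a h.1
    · exact h

section SuperDomination

variable {V : Type} {G : SimpleGraph V}

theorem superDomSet_compl_iff {T : Set V} :
    SuperDomSet G Tᶜ ↔ ∀ u ∈ T, ∃ w ∉ T, G.neighborSet w ∩ T = {u} := by
  simp only [SuperDomSet, compl_compl, Set.mem_compl_iff]

theorem SuperDomSet.pendant_witness {S : Set V} (hS : SuperDomSet G S) {u w : V} (hu : u ∉ S)
    (hw : ∀ w', G.Adj w' u → w' = w) : w ∈ S ∧ ∀ v ∉ S, G.Adj w v → v = u := by
  obtain ⟨w', hw'S, hw'⟩ := hS u hu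
  have hadj : G.Adj w' u := (hw' ▸ rfl : u ∈ G.neighborSet w' ∩ Sᶜ).1
  obtain rfl := hw w' hadj
  refine ⟨hw'S, fun v hv hwv => ?_⟩
  have : v ∈ G.neighborSet w' ∩ Sᶜ := ⟨hwv, hv⟩
  rwa [hw'] at this

theorem superDomNum_eq_of_compl [Finite V] {k m : ℕ} (hcard : Nat.card V = k + m)
    (hex : ∃ S, SuperDomSet G S ∧ Sᶜ.ncard = m)
    (hle : ∀ S, SuperDomSet G S → Sᶜ.ncard ≤ m) : superDomNum G = k := by
  have hsum (S : Set V) : S.ncard + Sᶜ.ncard = k + m := hcard ▸ Set.ncard_add_ncard_compl S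
  obtain ⟨S₀, hS₀, hS₀m⟩ := hex
  refine le_antisymm (Nat.sInf_le ⟨S₀, hS₀, by linarith [hsum S₀]⟩) (le_csInf ⟨_, S₀, hS₀, rfl⟩ ?_)
  rintro _ ⟨S, hS, rfl⟩
  linarith [hsum S, hle S hS]

end SuperDomination

section Subdivide

variable {V : Type} {G : SimpleGraph V} {F : Set (Sym2 V)}

@[simp]
theorem subdivide_adj_inl_inl {a b : V} :
    (subdivide G F).Adj (.inl a) (.inl b) ↔ G.Adj a b ∧ s(a, b) ∉ F := Iff.rfl

@[simp]
theorem subdivide_adj_inl_inr {a : V} {e : F} :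
    (subdivide G F).Adj (.inl a) (.inr e) ↔ a ∈ (e : Sym2 V) := Iff.rfl

@[simp]
theorem subdivide_adj_inr_inl {a : V} {e : F} :
    (subdivide G F).Adj (.inr e) (.inl a) ↔ a ∈ (e : Sym2 V) := Iff.rfl

@[simp]
theorem subdivide_not_adj_inr_inr {e f : F} : ¬(subdivide G F).Adj (.inr e) (.inr f) := id

end Subdivide

section Star

variable {β : Type}

theorem completeBipartiteGraph_unit_edge_eq {e : Sym2 (Unit ⊕ β)}
    (he : e ∈ (completeBipartiteGraph Unit β).edgeSet) : ∃ b, e = s(.inl (), .inr b) := by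
  induction e using Sym2.ind with
  | _ x y =>
    rcases x with ⟨⟩ | a <;> rcases y with ⟨⟩ | b <;> simp at he
    · exact ⟨b, rfl⟩
    · exact ⟨a, Sym2.eq_swap⟩

theorem superDomNum_star [Finite β] [Nonempty β] :
    superDomNum (completeBipartiteGraph Unit β) = Nat.card β := by
  obtain ⟨b⟩ := ‹Nonempty β›
  refine superDomNum_eq_of_compl (m := 1) (by simp [add_comm]) ⟨{.inr b}ᶜ, ?_, by simp⟩ ?_
  · rw [superDomSet_compl_iff]
    rintro u rfl
    exact ⟨.inl (), by simp, by ext; simp⟩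
  · intro S hS
    suffices ∃ v, Sᶜ ⊆ {v} by
      obtain ⟨v, hv⟩ := this
      simpa using Set.ncard_le_ncard hv
    by_cases hleaf : ∃ b, .inr b ∉ S
    · obtain ⟨b, hb⟩ := hleaf
      obtain ⟨hc, hcv⟩ := hS.pendant_witness (w := .inl ()) hb (by rintro (⟨⟩ | _) h <;> simp_all)
      refine ⟨.inr b, ?_⟩
      rintro (⟨⟩ | b') hv
      · exact absurd hc hv
      · exact hcv _ hv (by simp)
    · push Not at hleaf
      refine ⟨.inl (), ?_⟩
      rintro (⟨⟩ | b') hv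
      · rfl
      · exact absurd (hleaf b') hv

end Star

section SubdividedStar

variable {β : Type} (a : β)

local notation "E" => (s(Sum.inl (), Sum.inr a) : Sym2 (Unit ⊕ β))

local notation "T" => subdivide (completeBipartiteGraph Unit β) {E}

theorem superDomSet_subdivide_star_compl_pair {b : β} (hba : b ≠ a) :
    SuperDomSet T {.inl (.inr a), .inl (.inr b)}ᶜ := by
  rw [superDomSet_compl_iff]
  rintro u (rfl | rfl)
  · refine ⟨.inr ⟨E, rfl⟩, by simp, ?_⟩
    ext ((⟨⟩ | b') | ⟨_, rfl⟩) <;> simp +contextual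
  · refine ⟨.inl (.inl ()), by simp, ?_⟩
    ext ((⟨⟩ | b') | ⟨_, rfl⟩) <;> simp +contextual [and_or_left, hba]

variable {a} in
theorem SuperDomSet.subdivide_star_compl_subset_pair {S : Set ((Unit ⊕ β) ⊕ ({E} : Set _))}
    (hS : SuperDomSet T S) : ∃ p q, Sᶜ ⊆ {p, q} := by
  by_cases hleaf : ∃ b, b ≠ a ∧ .inl (.inr b) ∉ S
  · obtain ⟨b, hba, hb⟩ := hleaf
    obtain ⟨hc, hcv⟩ := hS.pendant_witness (w := .inl (.inl ())) hb
      (by rintro ((⟨⟩ | _) | ⟨_, rfl⟩) h <;> simp_all)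
    refine ⟨.inl (.inr a), .inl (.inr b), ?_⟩
    rintro ((⟨⟩ | b') | ⟨_, rfl⟩) hv
    · exact absurd hc hv
    · obtain rfl | hb'a := eq_or_ne b' a
      · exact .inl rfl
      · exact .inr (hcv _ hv (by simpa))
    · exact absurd (hcv _ hv (by simp)) (by simp)
  push Not at hleaf
  by_cases ha : .inl (.inr a) ∈ S
  · refine ⟨.inl (.inl ()), .inr ⟨E, rfl⟩, ?_⟩
    rintro ((⟨⟩ | b') | ⟨_, rfl⟩) hv
    · exact .inl rfl
    · obtain rfl | hb'a := eq_or_ne b' a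
      exacts [absurd ha hv, absurd (hleaf b' hb'a) hv]
    · exact .inr rfl
  · obtain ⟨hxS, hxv⟩ := hS.pendant_witness (w := .inr ⟨E, rfl⟩) ha
      (by rintro ((⟨⟩ | _) | ⟨_, rfl⟩) h <;> simp_all)
    refine ⟨.inl (.inr a), .inl (.inr a), ?_⟩
    rintro ((⟨⟩ | b') | ⟨_, rfl⟩) hv
    · exact absurd (hxv _ hv (by simp)) (by simp)
    · exact .inl (by rw [not_imp_comm.mp (hleaf b') hv])
    · exact absurd hxS hv

theorem superDomNum_subdivide_star [Finite β] [Nontrivial β] :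
    superDomNum T = Nat.card β := by
  obtain ⟨b, hba⟩ := exists_ne a
  refine superDomNum_eq_of_compl (m := 2) (by simp; ring)
    ⟨_, superDomSet_subdivide_star_compl_pair a hba, by simp [hba.symm]⟩ fun S hS => ?_
  obtain ⟨p, q, hpq⟩ := hS.subdivide_star_compl_subset_pair
  exact (Set.ncard_le_ncard hpq).trans ((Set.ncard_insert_le _ _).trans (by simp))

end SubdividedStar

/-- Every star of order at least 3 is in Class 2: subdividing any single edge of
`K_{1,n}` with `n ≥ 2` does not change the super domination number. -/
theorem star_subdivide_superDomNum (n : ℕ) (hn : 2 ≤ n) :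
    ∀ e ∈ (completeBipartiteGraph Unit (Fin n)).edgeSet,
      superDomNum (subdivide (completeBipartiteGraph Unit (Fin n)) {e}) =
        superDomNum (completeBipartiteGraph Unit (Fin n)) := by
  intro e he
  obtain ⟨a, rfl⟩ := completeBipartiteGraph_unit_edge_eq he
  have : Nontrivial (Fin n) := Fin.nontrivial_iff_two_le.mpr hn
  rw [superDomNum_subdivide_star, superDomNum_star]
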